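/- arXiv:2307.13786 — 2 statements merged into one kernel-verified Lean document; each statement's English description precedes it below -/
import Mathlib

section
/- The function z ↦ J_n(z)² + Y_n(z)² is strictly decreasing on (0, ∞) for every integer n ≥ 0, where J_n and Y_n are the Bessel functions of the first and second kind. -/
open Complex Real MeasureTheory Set

set_option maxHeartbeats 1000000 in
lemma expcosh_integrable {x : ℝ} (hx : 0 < x) :
    IntegrableOn (fun t => Real.exp (-x * Real.cosh t)) (Ioi (0:ℝ)) := by
  have hmeas : Measurable (fun t : ℝ => Real.exp (-x * Real.cosh t)) :=
    (Real.continuous_exp.comp ((continuous_const.mul Real.continuous_cosh))).measurable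
  have hbound : IntegrableOn (fun t : ℝ => Real.exp (-x * t)) (Ioi (0:ℝ)) :=
    exp_neg_integrableOn_Ioi 0 hx
  refine MeasureTheory.Integrable.mono hbound hmeas.aestronglyMeasurable ?_
  filter_upwards [MeasureTheory.ae_restrict_mem measurableSet_Ioi] with t ht
  rw [Real.norm_eq_abs, Real.norm_eq_abs, abs_of_pos (Real.exp_pos _),
    abs_of_pos (Real.exp_pos _)]
  apply Real.exp_le_exp.2
  have h1 : t ≤ Real.cosh t := le_trans (Real.self_le_sinh_iff.2 (le_of_lt ht))
    (Real.sinh_lt_cosh (x := t)).le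
  nlinarith

lemma K0_strictAnti (K₀ : ℝ → ℝ)
    (hK₀rep : ∀ x > (0:ℝ), K₀ x = ∫ t in Ioi (0:ℝ), Real.exp (-x * Real.cosh t))
    {x y : ℝ} (hx : 0 < x) (hxy : x < y) : K₀ y < K₀ x := by
  have hy : 0 < y := hx.trans hxy
  rw [hK₀rep x hx, hK₀rep y hy]
  have hix := expcosh_integrable hx
  have hiy := expcosh_integrable hy
  have hdiff : 0 < ∫ t in Ioi (0:ℝ),
      (Real.exp (-x * Real.cosh t) - Real.exp (-y * Real.cosh t)) := by
    set f := fun t : ℝ => Real.exp (-x * Real.cosh t) - Real.exp (-y * Real.cosh t) with hf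
    have hint : IntegrableOn f (Ioi (0:ℝ)) := hix.sub hiy
    have hpos : ∀ t ∈ Ioi (0:ℝ), 0 < f t := by
      intro t ht
      have : -y * Real.cosh t < -x * Real.cosh t := by
        have := Real.cosh_pos (x := t); nlinarith
      simpa [hf, sub_pos] using Real.exp_lt_exp.2 this
    have hnn : 0 ≤ᵐ[volume.restrict (Ioi (0:ℝ))] f := by
      filter_upwards [MeasureTheory.ae_restrict_mem measurableSet_Ioi] with t ht
      exact (hpos t ht).le
    rw [MeasureTheory.setIntegral_pos_iff_support_of_nonneg_ae hnn hint]
    have hsub : Ioi (0:ℝ) ⊆ Function.support f ∩ Ioi (0:ℝ) := fun t ht =>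
      ⟨(hpos t ht).ne', ht⟩
    calc (0:ENNReal) < volume (Ioi (0:ℝ)) := by simp
      _ ≤ volume (Function.support f ∩ Ioi (0:ℝ)) := measure_mono hsub
  have := MeasureTheory.integral_sub hix hiy
  linarith [this ▸ hdiff]

/-- z ↦ J_n(z)² + Y_n(z)² is strictly decreasing on (0,∞) for n ≥ 0.
Nicholson's integral representation is assumed, together with integrability of its
integrand; K₀ is characterized by its integral representation, from which it is positive
and strictly decreasing on (0,∞). -/
theorem bessel_sq_sum_strictAnti
    (J Y : ℤ → ℝ → ℝ) (K₀ : ℝ → ℝ)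
    (hK₀rep : ∀ x > (0:ℝ), K₀ x = ∫ t in Ioi (0:ℝ), Real.exp (-x * Real.cosh t))
    (hNicholson : ∀ n : ℤ, 0 ≤ n → ∀ z > (0:ℝ),
      J n z ^ 2 + Y n z ^ 2
        = (8 / π ^ 2) * ∫ t in Ioi (0:ℝ), Real.cosh (2 * (n : ℝ) * t) * K₀ (2 * z * Real.sinh t))
    (hInt : ∀ n : ℤ, 0 ≤ n → ∀ z > (0:ℝ),
      IntegrableOn (fun t => Real.cosh (2 * (n : ℝ) * t) * K₀ (2 * z * Real.sinh t)) (Ioi (0:ℝ)))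
    (n : ℤ) (hn : 0 ≤ n) :
    StrictAntiOn (fun z => J n z ^ 2 + Y n z ^ 2) (Ioi (0:ℝ)) := by
  intro a ha b hb hab
  simp only [mem_Ioi] at ha hb
  show J n b ^ 2 + Y n b ^ 2 < J n a ^ 2 + Y n a ^ 2
  rw [hNicholson n hn a ha, hNicholson n hn b hb]
  have hc : (0:ℝ) < 8 / π ^ 2 := by positivity
  refine mul_lt_mul_of_pos_left ?_ hc
  have hia := hInt n hn a ha
  have hib := hInt n hn b hb
  set fa := fun t : ℝ => Real.cosh (2 * (n : ℝ) * t) * K₀ (2 * a * Real.sinh t)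
  set fb := fun t : ℝ => Real.cosh (2 * (n : ℝ) * t) * K₀ (2 * b * Real.sinh t)
  have hpos : ∀ t ∈ Ioi (0:ℝ), 0 < fa t - fb t := by
    intro t ht
    have hst : 0 < Real.sinh t := Real.sinh_pos_iff.2 ht
    have h1 : 0 < 2 * a * Real.sinh t := by positivity
    have h2 : 2 * a * Real.sinh t < 2 * b * Real.sinh t := by nlinarith
    have hK := K0_strictAnti K₀ hK₀rep h1 h2
    have hcosh := Real.cosh_pos (x := 2 * (n : ℝ) * t)
    simp only [fa, fb]
    nlinarith
  have hdiff : 0 < ∫ t in Ioi (0:ℝ), (fa t - fb t) := by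
    have hint : IntegrableOn (fun t => fa t - fb t) (Ioi (0:ℝ)) := hia.sub hib
    have hnn : 0 ≤ᵐ[volume.restrict (Ioi (0:ℝ))] fun t => fa t - fb t := by
      filter_upwards [MeasureTheory.ae_restrict_mem measurableSet_Ioi] with t ht
      exact (hpos t ht).le
    rw [MeasureTheory.setIntegral_pos_iff_support_of_nonneg_ae hnn hint]
    have hsub : Ioi (0:ℝ) ⊆ Function.support (fun t => fa t - fb t) ∩ Ioi (0:ℝ) :=
      fun t ht => ⟨(hpos t ht).ne', ht⟩
    calc (0:ENNReal) < volume (Ioi (0:ℝ)) := by simp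
      _ ≤ volume _ := measure_mono hsub
  have := MeasureTheory.integral_sub hia hib
  simp only [fa, fb] at this hdiff
  linarith [this ▸ hdiff]
end

section
/- Let κ, R > 0, N ∈ ℕ, and let φ(θ) = Σ_{|n|≤N} φ^{(n)} e^{inθ} and ψ(θ) = Σ_{|n|≤N} ψ^{(n)} e^{inθ} be trigonometric polynomials on the circle of radius R. If 2π Σ_{|n|≤N} Im(h_n(κR)) |φ^{(n)}|² = 2π Σ_{|n|≤N} Im(k_n(κR)) |ψ^{(n)}|², then φ = 0, where h_n, k_n are the logarithmic-derivative symbols of the Hankel and modified Bessel functions. -/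
open Complex Real

/-- Let κ, R > 0, N ∈ ℕ, and let φ, ψ be trigonometric polynomials on the
circle of radius R with coefficients φc, ψc supported on |n| ≤ N. If
2π Σ_{|n|≤N} Im(h_n(κR)) |φ^{(n)}|² = 2π Σ_{|n|≤N} Im(k_n(κR)) |ψ^{(n)}|², then φ = 0.
Here h, k are the logarithmic-derivative symbols of the Hankel and modified Bessel
functions evaluated at κR, satisfying Im(h_n(κR)) > 0 and Im(k_n(κR)) = 0. -/
theorem energy_identity_forces_zero
    (h k : ℤ → ℂ)
    (hhim : ∀ n : ℤ, 0 < (h n).im)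
    (hkim : ∀ n : ℤ, (k n).im = 0)
    (κ R : ℝ) (hκ : 0 < κ) (hR : 0 < R)
    (N : ℕ) (φc ψc : ℤ → ℂ)
    (φ ψ : ℝ → ℂ)
    (hφ : φ = fun (θ : ℝ) => ∑ n ∈ Finset.Icc (-(N : ℤ)) N,
      φc n * Complex.exp (Complex.I * (n : ℂ) * (θ : ℝ)))
    (hψ : ψ = fun (θ : ℝ) => ∑ n ∈ Finset.Icc (-(N : ℤ)) N,
      ψc n * Complex.exp (Complex.I * (n : ℂ) * (θ : ℝ)))
    (hEnergy : 2 * π * ∑ n ∈ Finset.Icc (-(N : ℤ)) N, (h n).im * ‖φc n‖ ^ 2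
      = 2 * π * ∑ n ∈ Finset.Icc (-(N : ℤ)) N, (k n).im * ‖ψc n‖ ^ 2) :
    ∀ θ : ℝ, φ θ = 0 := by
  have hrhs : ∑ n ∈ Finset.Icc (-(N : ℤ)) N, (k n).im * ‖ψc n‖ ^ 2 = 0 := by
    apply Finset.sum_eq_zero; intro n _; rw [hkim n]; ring
  have hsum : ∑ n ∈ Finset.Icc (-(N : ℤ)) N, (h n).im * ‖φc n‖ ^ 2 = 0 := by
    have := hEnergy; rw [hrhs, mul_zero] at this
    have hπ : (2 : ℝ) * π ≠ 0 := by positivity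
    exact (mul_eq_zero.mp this).resolve_left hπ
  have hzero : ∀ n ∈ Finset.Icc (-(N : ℤ)) N, φc n = 0 := by
    intro n hn
    have h0 : (h n).im * ‖φc n‖ ^ 2 = 0 := by
      have := (Finset.sum_eq_zero_iff_of_nonneg (fun m _ => mul_nonneg (hhim m).le (sq_nonneg _))).mp hsum n hn
      exact this
    have : ‖φc n‖ ^ 2 = 0 := by
      rcases mul_eq_zero.mp h0 with h1 | h2
      · exact absurd h1 (ne_of_gt (hhim n))
      · exact h2
    simpa using this
  intro θ
  rw [hφ]
  exact Finset.sum_eq_zero fun n hn => by rw [hzero n hn, zero_mul]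
end
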